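/- Let A ⊆ ℝⁿ be a bounded set of finite perimeter with |A| > 0. Then there exist constants c > 0 and C > 0, depending only on n and A, such that for every y ∈ ℝⁿ one has min{ c, C · |y| } ≤ |(y + A) Δ A|. -/

import Mathlib

open MeasureTheory Metric Set Bornology
open scoped ENNReal Pointwise NNReal

noncomputable section

/-- The divergence of a vector field on `ℝⁿ`. -/
def vdiv (n : ℕ) (ψ : EuclideanSpace ℝ (Fin n) → EuclideanSpace ℝ (Fin n))
    (x : EuclideanSpace ℝ (Fin n)) : ℝ :=
  ∑ i : Fin n, fderiv ℝ ψ x (EuclideanSpace.single i 1) i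

/-- Admissible test vector fields for the relative perimeter in an open set `Ω`. -/
def RelAdmissible (n : ℕ) (Ω : Set (EuclideanSpace ℝ (Fin n)))
    (ψ : EuclideanSpace ℝ (Fin n) → EuclideanSpace ℝ (Fin n)) : Prop :=
  ContDiff ℝ (⊤ : ℕ∞) ψ ∧ HasCompactSupport ψ ∧ tsupport ψ ⊆ Ω ∧ ∀ x, ‖ψ x‖ ≤ 1

/-- The (De Giorgi) perimeter of `E` relative to `Ω`. -/
def relPerimeter (n : ℕ) (Ω E : Set (EuclideanSpace ℝ (Fin n))) : ℝ≥0∞ :=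
  ⨆ ψ : {ψ : EuclideanSpace ℝ (Fin n) → EuclideanSpace ℝ (Fin n) // RelAdmissible n Ω ψ},
    ENNReal.ofReal (∫ x in E, vdiv n ψ.1 x)

/-- The relative isoperimetric deficit `μ(E)` of `E` inside the cone `C`. -/
def relDeficit (n : ℕ) (C E : Set (EuclideanSpace ℝ (Fin n))) : ℝ :=
  (relPerimeter n C E).toReal /
    (n * (volume (ball (0 : EuclideanSpace ℝ (Fin n)) 1 ∩ C)).toReal ^ ((1 : ℝ) / n) *
      (volume E).toReal ^ (((n : ℝ) - 1) / n)) - 1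

/-- `C` is an open convex cone. -/
def IsOpenConvexCone {m : ℕ} (C : Set (EuclideanSpace ℝ (Fin m))) : Prop :=
  C.Nonempty ∧ IsOpen C ∧ Convex ℝ C ∧ ∀ x ∈ C, ∀ l : ℝ, 0 < l → l • x ∈ C

/-- `C` contains no lines. -/
def ContainsNoLines {m : ℕ} (C : Set (EuclideanSpace ℝ (Fin m))) : Prop :=
  ¬ ∃ (x v : EuclideanSpace ℝ (Fin m)), v ≠ 0 ∧ ∀ t : ℝ, x + t • v ∈ C


theorem volume_symmDiff_translate_ge'
    (n : ℕ) (A : Set (EuclideanSpace ℝ (Fin n)))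
    (hA : MeasurableSet A) (hAbdd : IsBounded A)
    (hAvol : 0 < volume A) :
    ∃ c C : ℝ, 0 < c ∧ 0 < C ∧ ∀ y : EuclideanSpace ℝ (Fin n),
      ENNReal.ofReal (min c (C * ‖y‖)) ≤ volume (symmDiff (y +ᵥ A) A) := by
  obtain ⟨r, hr⟩ := hAbdd.subset_closedBall 0
  set R : ℝ := |r| + 1 with hRdef
  have hR0 : 0 < R := by positivity
  have hAR : A ⊆ ball 0 R := hr.trans (closedBall_subset_ball (by
    have := le_abs_self r; linarith))
  have hvfin : volume A < ⊤ := lt_of_le_of_lt (measure_mono hAR) measure_ball_lt_top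
  set v : ℝ := (volume A).toReal with hvdef
  have hv : 0 < v := ENNReal.toReal_pos hAvol.ne' hvfin.ne
  have hvA : volume A = ENNReal.ofReal v := (ENNReal.ofReal_toReal hvfin.ne).symm
  -- key: for far translations the symmetric difference has measure 2v
  have key : ∀ w : EuclideanSpace ℝ (Fin n), 2 * R ≤ ‖w‖ →
      volume (symmDiff (w +ᵥ A) A) = ENNReal.ofReal (2 * v) := by
    intro w hw
    have hdisj : Disjoint (w +ᵥ A) A := by
      rw [Set.disjoint_left]
      rintro x ⟨a, ha, rfl⟩ hxA
      have h1 : ‖a‖ < R := mem_ball_zero_iff.mp (hAR ha)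
      have h2 : ‖w + a‖ < R := mem_ball_zero_iff.mp (hAR hxA)
      have : ‖w‖ ≤ ‖w + a‖ + ‖a‖ := by
        have := norm_add_le (w + a) (-a); simpa using this
      linarith
    rw [hdisj.symmDiff_eq_sup]
    show volume ((w +ᵥ A) ∪ A) = _
    rw [measure_union hdisj hA, measure_vadd, hvA, ← ENNReal.ofReal_add hv.le hv.le]
    ring_nf
  -- subadditivity
  have fsub : ∀ y z : EuclideanSpace ℝ (Fin n),
      volume (symmDiff ((y + z) +ᵥ A) A) ≤
        volume (symmDiff (y +ᵥ A) A) + volume (symmDiff (z +ᵥ A) A) := by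
    intro y z
    have hvadd : (y + z) +ᵥ A = z +ᵥ (y +ᵥ A) := by
      rw [vadd_vadd, add_comm]
    have himg : symmDiff (z +ᵥ (y +ᵥ A)) (z +ᵥ A) = z +ᵥ (symmDiff (y +ᵥ A) A) := by
      simp only [← Set.image_vadd]
      exact (Set.image_symmDiff (add_right_injective z) _ _).symm
    calc volume (symmDiff ((y + z) +ᵥ A) A)
        ≤ volume (symmDiff ((y + z) +ᵥ A) (z +ᵥ A) ∪ symmDiff (z +ᵥ A) A) :=
          measure_mono (symmDiff_triangle _ _ _)
      _ ≤ volume (symmDiff ((y + z) +ᵥ A) (z +ᵥ A)) + volume (symmDiff (z +ᵥ A) A) :=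
          measure_union_le _ _
      _ = volume (symmDiff (y +ᵥ A) A) + volume (symmDiff (z +ᵥ A) A) := by
          rw [hvadd, himg, measure_vadd]
  have fnsmul : ∀ (k : ℕ) (y : EuclideanSpace ℝ (Fin n)),
      volume (symmDiff ((k • y) +ᵥ A) A) ≤ k * volume (symmDiff (y +ᵥ A) A) := by
    intro k y
    induction k with
    | zero => simp
    | succ k ih =>
      have hs : (k + 1) • y = k • y + y := succ_nsmul y k
      calc volume (symmDiff (((k + 1) • y) +ᵥ A) A)
          ≤ volume (symmDiff ((k • y) +ᵥ A) A) + volume (symmDiff (y +ᵥ A) A) := by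
            rw [hs]; exact fsub _ _
        _ ≤ k * volume (symmDiff (y +ᵥ A) A) + volume (symmDiff (y +ᵥ A) A) :=
            add_le_add_left ih _
        _ = (k + 1 : ℕ) * volume (symmDiff (y +ᵥ A) A) := by
            push_cast; ring
  refine ⟨2 * v, v / (2 * R), by positivity, by positivity, fun y => ?_⟩
  rcases le_or_gt (2 * R) ‖y‖ with h | h
  · rw [key y h]
    exact ENNReal.ofReal_le_ofReal (min_le_left _ _)
  · rcases eq_or_ne y 0 with rfl | hy0
    · simp
    have hy : 0 < ‖y‖ := norm_pos_iff.mpr hy0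
    set k : ℕ := ⌈(2 * R) / ‖y‖⌉₊ with hkdef
    have hkpos : 0 < k := Nat.ceil_pos.mpr (by positivity)
    have hkge : (2 * R) / ‖y‖ ≤ (k : ℝ) := Nat.le_ceil _
    have hknorm : 2 * R ≤ ‖k • y‖ := by
      rw [← Nat.cast_smul_eq_nsmul ℝ, norm_smul, Real.norm_natCast]
      calc 2 * R = (2 * R) / ‖y‖ * ‖y‖ := by field_simp
        _ ≤ (k : ℝ) * ‖y‖ := by nlinarith
    have hkup : (k : ℝ) * ‖y‖ ≤ 4 * R := by
      have hceil : (k : ℝ) < (2 * R) / ‖y‖ + 1 := Nat.ceil_lt_add_one (by positivity)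
      have : (k : ℝ) * ‖y‖ < 2 * R + ‖y‖ := by
        have := mul_lt_mul_of_pos_right hceil hy
        calc (k : ℝ) * ‖y‖ < ((2 * R) / ‖y‖ + 1) * ‖y‖ := this
          _ = 2 * R + ‖y‖ := by field_simp
      linarith
    have hmain : ENNReal.ofReal (2 * v) ≤ (k : ℝ≥0∞) * volume (symmDiff (y +ᵥ A) A) := by
      rw [← key (k • y) hknorm]
      exact fnsmul k y
    have hkne : (k : ℝ≥0∞) ≠ 0 := by exact_mod_cast hkpos.ne'
    have hknt : (k : ℝ≥0∞) ≠ ⊤ := ENNReal.natCast_ne_top k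
    have step : ENNReal.ofReal (v / (2 * R) * ‖y‖) ≤ volume (symmDiff (y +ᵥ A) A) := by
      rw [← ENNReal.mul_le_mul_iff_right hkne hknt]
      calc (k : ℝ≥0∞) * ENNReal.ofReal (v / (2 * R) * ‖y‖)
          = ENNReal.ofReal ((k : ℝ) * (v / (2 * R) * ‖y‖)) := by
            rw [ENNReal.ofReal_mul (Nat.cast_nonneg k), ENNReal.ofReal_natCast]
        _ ≤ ENNReal.ofReal (2 * v) := by
            apply ENNReal.ofReal_le_ofReal
            have : (k : ℝ) * (v / (2 * R) * ‖y‖) = (k : ℝ) * ‖y‖ * (v / (2 * R)) := by ring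
            rw [this]
            calc (k : ℝ) * ‖y‖ * (v / (2 * R)) ≤ 4 * R * (v / (2 * R)) := by
                  apply mul_le_mul_of_nonneg_right hkup (by positivity)
              _ = 2 * v := by field_simp; ring
        _ ≤ (k : ℝ≥0∞) * volume (symmDiff (y +ᵥ A) A) := hmain
    calc ENNReal.ofReal (min (2 * v) (v / (2 * R) * ‖y‖))
        ≤ ENNReal.ofReal (v / (2 * R) * ‖y‖) :=
          ENNReal.ofReal_le_ofReal (min_le_right _ _)
      _ ≤ volume (symmDiff (y +ᵥ A) A) := step


/-- **Lower bound for the volume of the symmetric difference of translates.** -/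
theorem volume_symmDiff_translate_ge
    (n : ℕ) (A : Set (EuclideanSpace ℝ (Fin n)))
    (hA : MeasurableSet A) (hAbdd : IsBounded A)
    (hAper : relPerimeter n univ A ≠ ⊤) (hAvol : 0 < volume A) :
    ∃ c C : ℝ, 0 < c ∧ 0 < C ∧ ∀ y : EuclideanSpace ℝ (Fin n),
      ENNReal.ofReal (min c (C * ‖y‖)) ≤ volume (symmDiff (y +ᵥ A) A) :=
  volume_symmDiff_translate_ge' n A hA hAbdd hAvol

end
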